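/- arXiv:1111.0854 — 2 statements merged into one kernel-verified Lean document; each statement's English description precedes it below -/
import Mathlib

section
/- Let D be a small category, X : D^op → Set a functor, Q_X : h^D/X → D the forgetful functor from the comma category of the Yoneda embedding over X, and F(Q_X) : F(h^D/X) → F(D) the induced functor on categories of factorizations. Then for every object α of F(D), each connected component of the comma category α/F(Q_X) has an initial object. -/
open CategoryTheory

universe v v' u u'

/-- Objects of the category of factorizations `FC`: the morphisms of `C`. -/
structure Factorization (C : Type u) [Category.{v} C] : Type max u v where
  {X : C}
  {Y : C}
  hom : X ⟶ Y

namespace Factorization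

variable {C : Type u} [Category.{v} C]

/-- A morphism `α ⟶ β` in the category of factorizations: a pair
`(f : dom β ⟶ dom α, g : cod α ⟶ cod β)` with `β = g ∘ α ∘ f`. -/
@[ext]
structure Hom (α β : Factorization C) : Type v where
  f : β.X ⟶ α.X
  g : α.Y ⟶ β.Y
  w : β.hom = f ≫ α.hom ≫ g

/-- The category of factorizations. -/
instance category : Category (Factorization C) where
  Hom := Hom
  id α := ⟨𝟙 _, 𝟙 _, by simp⟩
  comp u v := ⟨v.f ≫ u.f, u.g ≫ v.g, by rw [v.w, u.w]; simp⟩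
  id_comp u := by cases u; dsimp; congr 1 <;> simp
  comp_id u := by cases u; dsimp; congr 1 <;> simp
  assoc u v w := by dsimp; congr 1 <;> simp

@[simp] lemma id_f (α : Factorization C) : Hom.f (𝟙 α) = 𝟙 α.X := rfl
@[simp] lemma id_g (α : Factorization C) : Hom.g (𝟙 α) = 𝟙 α.Y := rfl
@[simp] lemma comp_f {α β γ : Factorization C} (u : α ⟶ β) (v : β ⟶ γ) :
    (u ≫ v).f = v.f ≫ u.f := rfl
@[simp] lemma comp_g {α β γ : Factorization C} (u : α ⟶ β) (v : β ⟶ γ) :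
    (u ≫ v).g = u.g ≫ v.g := rfl

@[ext] lemma hom_ext {α β : Factorization C} (u v : α ⟶ β)
    (hf : u.f = v.f) (hg : u.g = v.g) : u = v := Hom.ext hf hg

end Factorization

namespace Factorization

/-- The functor `FΦ : FC ⥤ FD` induced by `Φ : C ⥤ D`. -/
def fmap {C : Type u} [Category.{v} C] {D : Type u'} [Category.{v'} D] (Φ : C ⥤ D) :
    Factorization C ⥤ Factorization D where
  obj α := Factorization.mk (Φ.map α.hom)
  map u := ⟨Φ.map u.f, Φ.map u.g, by dsimp; rw [u.w]; simp⟩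
  map_id α := by ext <;> simp
  map_comp u v := by ext <;> simp

end Factorization


namespace FactInitial

variable {D : Type u} [SmallCategory D] (X : Dᵒᵖ ⥤ Type u) (α : Factorization D)

/-- The zigzag invariant: the element of `X` at `α.Y` induced by an object of the comma
category. -/
def inv (z : StructuredArrow α (Factorization.fmap (CostructuredArrow.proj yoneda X))) :
    yoneda.obj α.Y ⟶ X :=
  yoneda.map z.hom.g ≫ z.right.Y.hom

/-- The candidate initial object associated to `ξ : yoneda.obj α.Y ⟶ X`. -/
def mkI (ξ : yoneda.obj α.Y ⟶ X) :
    StructuredArrow α (Factorization.fmap (CostructuredArrow.proj yoneda X)) :=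
  StructuredArrow.mk (Y := Factorization.mk
    ((CostructuredArrow.homMk α.hom (by simp) :
      CostructuredArrow.mk (yoneda.map α.hom ≫ ξ) ⟶ CostructuredArrow.mk ξ)))
    ⟨𝟙 α.X, 𝟙 α.Y, by simp [Factorization.fmap]; exact (Category.id_comp (obj := D) _).symm.trans (congrArg _ (Category.comp_id (obj := D) _).symm)⟩

@[simp] lemma inv_mkI (ξ : yoneda.obj α.Y ⟶ X) : inv X α (mkI X α ξ) = ξ := by
  simp [inv, mkI]
  exact (congrArg (· ≫ ξ) (yoneda.map_id α.Y)).trans (Category.id_comp _)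

lemma inv_eq_of_hom {z z' : StructuredArrow α (Factorization.fmap (CostructuredArrow.proj yoneda X))}
    (w : z ⟶ z') : inv X α z = inv X α z' := by
  have hw := StructuredArrow.w w
  have hg : z'.hom.g = z.hom.g ≫ (w.right.g).left := by
    rw [← hw]; rfl
  have hc : yoneda.map (w.right.g.left) ≫ z'.right.Y.hom = z.right.Y.hom :=
    CostructuredArrow.w w.right.g
  dsimp only [inv]
  rw [hg]
  erw [Functor.map_comp, Category.assoc, hc]

lemma inv_eq_of_zigzag {z z' : StructuredArrow α (Factorization.fmap (CostructuredArrow.proj yoneda X))}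
    (h : Zigzag z z') : inv X α z = inv X α z' := by
  induction h with
  | refl => rfl
  | tail _ hzag ih =>
    rcases hzag with ⟨⟨w⟩⟩ | ⟨⟨w⟩⟩
    · exact ih.trans (inv_eq_of_hom X α w)
    · exact ih.trans (inv_eq_of_hom X α w).symm

/-- A morphism from the candidate initial object to any object with matching invariant. -/
def toHom (ξ : yoneda.obj α.Y ⟶ X)
    (y : StructuredArrow α (Factorization.fmap (CostructuredArrow.proj yoneda X)))
    (h : inv X α y = ξ) : mkI X α ξ ⟶ y := by
  have hyw : y.right.hom.left = y.hom.f ≫ α.hom ≫ y.hom.g := y.hom.w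
  refine StructuredArrow.homMk
    (⟨CostructuredArrow.homMk y.hom.f ?_, CostructuredArrow.homMk y.hom.g ?_, ?_⟩ :
      (mkI X α ξ).right ⟶ y.right) ?_
  · dsimp [mkI]
    rw [← h]
    dsimp [inv]
    erw [← Functor.map_comp_assoc, ← Functor.map_comp_assoc, Category.assoc, ← hyw]
    exact CostructuredArrow.w y.right.hom
  · exact h
  · apply CostructuredArrow.hom_ext
    dsimp [mkI]
    exact hyw
  · apply Factorization.hom_ext <;> dsimp [mkI, Factorization.fmap] <;> simp
    · exact Category.comp_id (obj := D) _
    · exact Category.id_comp (obj := D) _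

lemma hom_unique (ξ : yoneda.obj α.Y ⟶ X)
    (y : StructuredArrow α (Factorization.fmap (CostructuredArrow.proj yoneda X)))
    (u v : mkI X α ξ ⟶ y) : u = v := by
  have key : ∀ (w : mkI X α ξ ⟶ y), w.right.f.left = y.hom.f ∧ w.right.g.left = y.hom.g := by
    intro w
    have hw := w.w
    constructor
    · have := congrArg Factorization.Hom.f hw
      simp [mkI, Factorization.fmap] at this
      exact (Category.comp_id (obj := D) _).symm.trans this
    · have := congrArg Factorization.Hom.g hw
      simp [mkI, Factorization.fmap] at this
      exact (Category.id_comp (obj := D) _).symm.trans this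
  apply StructuredArrow.hom_ext
  apply Factorization.hom_ext
  · apply CostructuredArrow.hom_ext
    rw [(key u).1, (key v).1]
  · apply CostructuredArrow.hom_ext
    rw [(key u).2, (key v).2]

end FactInitial

/-- Let `D` be a small category, `X : Dᵒᵖ ⥤ Type` a functor, `Q_X : h^D/X ⥤ D` the
forgetful functor from the comma category of the Yoneda embedding over `X`, and
`F(Q_X) : F(h^D/X) ⥤ FD` the induced functor on categories of factorizations. Then for
every object `α` of `FD`, each connected component of the comma category `α/F(Q_X)`
has an initial object. -/
theorem initial_in_components {D : Type u} [SmallCategory D] (X : Dᵒᵖ ⥤ Type u)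
    (α : Factorization D)
    (z : StructuredArrow α (Factorization.fmap (CostructuredArrow.proj yoneda X))) :
    ∃ i : StructuredArrow α (Factorization.fmap (CostructuredArrow.proj yoneda X)),
      Zigzag i z ∧ ∀ y, Zigzag i y → Nonempty (Unique (i ⟶ y)) := by
  refine ⟨FactInitial.mkI X α (FactInitial.inv X α z), ?_, ?_⟩
  · exact Relation.ReflTransGen.single (Or.inl ⟨FactInitial.toHom X α _ z rfl⟩)
  · intro y hy
    have h : FactInitial.inv X α y = FactInitial.inv X α z := by
      have := FactInitial.inv_eq_of_zigzag X α hy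
      rw [FactInitial.inv_mkI] at this; exact this.symm
    exact ⟨⟨⟨FactInitial.toHom X α _ y h⟩, fun u => FactInitial.hom_unique X α _ y u _⟩⟩
end

section
/- Let D ⊆ C be a closed full subcategory of a small category C (i.e., for every morphism c → d with d ∈ D, also c ∈ D). Then for any functor F : D^op → Ab, the functor F_D : C^op → Ab obtained by extending F by zero satisfies F_D ≅ Lan^{ι^op} F, where ι : D → C is the inclusion. Consequently colim_n^{C^op} F_D ≅ colim_n^{D^op} F for all n ≥ 0. -/
open CategoryTheory CategoryTheory.Limits Opposite

universe u

section Aux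

variable {J : Type*} [Category J] {B : Type*} [Category B]

/-- The point of a colimit cocone over a diagram indexed by an empty category is a zero
object (in a preadditive category). -/
lemma aux_isZero_pt [IsEmpty J] [Preadditive B] {K : J ⥤ B} {c : Cocone K}
    (hc : IsColimit c) : IsZero c.pt := by
  rw [IsZero.iff_id_eq_zero]
  exact hc.hom_ext (fun j => isEmptyElim j)

/-- A functor all of whose values are zero objects preserves all limits. -/
lemma aux_preservesLimitsOfShape_of_isZero {A : Type*} [Category A] [HasZeroMorphisms B]
    (F : A ⥤ B) (h : ∀ X, IsZero (F.obj X)) :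
    PreservesLimitsOfShape J F where
  preservesLimit := { preserves := fun {c} _ => ⟨{
      lift := fun s => (h _).from_ s.pt
      fac := fun s j => (h _).eq_of_tgt _ _
      uniq := fun s m _ => (h _).eq_of_tgt _ _ }⟩ }

end Aux

/-- Let `D ⊆ C` be a closed full subcategory of a small category `C` (closed: for
every morphism `c ⟶ d` with `d ∈ D`, also `c ∈ D`), given by a predicate `P` on the
objects of `C`.  Let `F : Dᵒᵖ ⥤ Ab` and let `G : Cᵒᵖ ⥤ Ab` be the functor obtained
from `F` by extending by zero (its restriction to `Dᵒᵖ` is isomorphic to `F` and its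
values outside `D` are zero).  Then `G ≅ Lan^{ιᵒᵖ} F`, where `ι : D ⥤ C` is the
inclusion, and consequently `colimₙ^{Cᵒᵖ} G ≅ colimₙ^{Dᵒᵖ} F` for all `n ≥ 0`. -/
theorem extension_by_zero_is_lan_and_preserves_derived_colim {C : Type u}
    [SmallCategory C] (P : C → Prop)
    [HasProjectiveResolutions (Cᵒᵖ ⥤ AddCommGrpCat.{u})]
    [HasProjectiveResolutions ((ObjectProperty.FullSubcategory P)ᵒᵖ ⥤ AddCommGrpCat.{u})]
    (hclosed : ∀ {c d : C}, (c ⟶ d) → P d → P c)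
    (F : (ObjectProperty.FullSubcategory P)ᵒᵖ ⥤ AddCommGrpCat.{u}) (G : Cᵒᵖ ⥤ AddCommGrpCat.{u})
    (e : (ObjectProperty.ι P).op ⋙ G ≅ F)
    (hzero : ∀ c : C, ¬ P c → IsZero (G.obj (op c))) :
    Nonempty (G ≅ ((ObjectProperty.ι P).op.lan).obj F) ∧
    ∀ n : ℕ,
      Nonempty
        (((colim (J := Cᵒᵖ) (C := AddCommGrpCat.{u})).leftDerived n).obj G ≅
          ((colim (J := (ObjectProperty.FullSubcategory P)ᵒᵖ) (C := AddCommGrpCat.{u})).leftDerived n).obj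
            F) := by
  classical
  set ι := ObjectProperty.ι P with hι
  -- Part 1: `G` is a left Kan extension of `F` along `ι.op`.
  let α : F ⟶ ι.op ⋙ G := e.inv
  have hpt : (Functor.LeftExtension.mk G α).IsPointwiseLeftKanExtension := by
    intro X
    by_cases h : P X.unop
    · -- there is a terminal object in the costructured arrow category
      let x : (ObjectProperty.FullSubcategory P)ᵒᵖ := op ⟨X.unop, h⟩
      let t : CostructuredArrow ι.op X := CostructuredArrow.mk (𝟙 (ι.op.obj x))
      have ht : IsTerminal t :=
        CostructuredArrow.mkIdTerminal (S := ι.op) (Y := x)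
      refine IsColimit.ofIsoColimit (colimitOfDiagramTerminal ht _)
        (Cocones.ext ((e.app (op ⟨X.unop, h⟩)).symm) (fun j => ?_))
      have hj : ι.op.map (ht.from j).left ≫ t.hom = j.hom := CostructuredArrow.w (ht.from j)
      have hj' : ι.op.map (ht.from j).left = j.hom := by
        simpa [t, x] using hj
      dsimp
      change _ = α.app j.left ≫ G.map j.hom
      rw [← hj']
      exact e.inv.naturality (ht.from j).left
    · haveI : IsEmpty (CostructuredArrow ι.op X) :=
        ⟨fun j => h (hclosed j.hom.unop j.left.unop.property)⟩
      exact
        { desc := fun s => (hzero X.unop h).to_ s.pt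
          fac := fun s j => isEmptyElim j
          uniq := fun s m _ => (hzero X.unop h).eq_of_src _ _ }
  haveI : G.IsLeftKanExtension α := hpt.isLeftKanExtension
  let e₁ : G ≅ ι.op.lan.obj F :=
    Functor.leftKanExtensionUnique G α (ι.op.lan.obj F) (ι.op.lanUnit.app F)
  refine ⟨⟨e₁⟩, fun n => ⟨?_⟩⟩
  -- Part 2: comparison of derived colimits.
  let L : ((ObjectProperty.FullSubcategory P)ᵒᵖ ⥤ AddCommGrpCat.{u}) ⥤ (Cᵒᵖ ⥤ AddCommGrpCat.{u}) := ι.op.lan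
  let adj := ι.op.lanAdjunction AddCommGrpCat.{u}
  haveI : L.IsLeftAdjoint := adj.isLeftAdjoint
  haveI : PreservesColimitsOfSize.{0, 0} L := adj.leftAdjoint_preservesColimits
  haveI hPFC : PreservesFiniteColimits L :=
    PreservesColimitsOfSize.preservesFiniteColimits _
  haveI hPFL : PreservesFiniteLimits L := by
    constructor
    intro J _ _
    apply preservesLimitsOfShape_of_evaluation
    intro X
    by_cases h : P X.unop
    · have eiso : (evaluation (ObjectProperty.FullSubcategory P)ᵒᵖ AddCommGrpCat.{u}).obj (op ⟨X.unop, h⟩) ≅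
          L ⋙ (evaluation Cᵒᵖ AddCommGrpCat.{u}).obj X :=
        NatIso.ofComponents
          (fun K => asIso ((ι.op.lanUnit.app K).app (op ⟨X.unop, h⟩)))
          (fun {K K'} f => by
            have := congr_app (ι.op.lanUnit.naturality f) (op ⟨X.unop, h⟩)
            simp at this; exact this)
      exact preservesLimitsOfShape_of_natIso eiso
    · haveI : IsEmpty (CostructuredArrow ι.op X) :=
        ⟨fun j => h (hclosed j.hom.unop j.left.unop.property)⟩
      exact aux_preservesLimitsOfShape_of_isZero _
        (fun K => aux_isZero_pt
          ((Functor.isPointwiseLeftKanExtensionOfIsLeftKanExtension _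
            (ι.op.lanUnit.app K)) X))
  haveI : L.Additive := Functor.additive_of_preserves_binary_products _
  haveI : L.PreservesHomology := inferInstance
  haveI : ((Functor.whiskeringLeft (ObjectProperty.FullSubcategory P)ᵒᵖ Cᵒᵖ AddCommGrpCat.{u}).obj ι.op).IsLeftAdjoint :=
    (ι.op.ranAdjunction AddCommGrpCat.{u}).isLeftAdjoint
  -- a projective resolution of `F`
  let Pr := (inferInstance : HasProjectiveResolution F).out.some
  -- extend it by zero to get a projective resolution of `L.obj F`
  let Qc := (L.mapHomologicalComplex (ComplexShape.down ℕ)).obj Pr.complex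
  have proj : ∀ m, Projective (Qc.X m) := fun m => adj.map_projective _ (Pr.projective m)
  let π' : Qc ⟶ (ChainComplex.single₀ _).obj (L.obj F) :=
    (L.mapHomologicalComplex _).map Pr.π ≫
      (HomologicalComplex.singleMapHomologicalComplex L (ComplexShape.down ℕ) 0).hom.app F
  haveI : QuasiIso π' := by
    haveI : QuasiIso ((L.mapHomologicalComplex (ComplexShape.down ℕ)).map Pr.π) :=
      inferInstance
    infer_instance
  let Q : ProjectiveResolution (L.obj F) :=
    { complex := Qc
      projective := proj
      π := π'
      quasiIso := ‹_› }
  -- the comparison of the complexes after applying `colim`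
  let b1 : ((colim (J := Cᵒᵖ) (C := AddCommGrpCat.{u})).mapHomologicalComplex
        (ComplexShape.down ℕ)).obj Qc ≅
      ((L ⋙ colim).mapHomologicalComplex (ComplexShape.down ℕ)).obj Pr.complex :=
    HomologicalComplex.Hom.isoOfComponents (fun i => Iso.refl _)
      (by intro i j _; exact (Category.id_comp _).trans ((Category.comp_id _).symm))
  let b2 : ((L ⋙ colim).mapHomologicalComplex (ComplexShape.down ℕ)).obj Pr.complex ≅
      ((colim (J := (ObjectProperty.FullSubcategory P)ᵒᵖ) (C := AddCommGrpCat.{u})).mapHomologicalComplex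
        (ComplexShape.down ℕ)).obj Pr.complex :=
    (NatIso.mapHomologicalComplex (Functor.lanCompColimIso ι.op) (ComplexShape.down ℕ)).app
      Pr.complex
  exact ((colim (J := Cᵒᵖ) (C := AddCommGrpCat.{u})).leftDerived n).mapIso e₁ ≪≫
    Q.isoLeftDerivedObj colim n ≪≫
    (HomologicalComplex.homologyFunctor AddCommGrpCat.{u} _ n).mapIso (b1 ≪≫ b2) ≪≫
    (Pr.isoLeftDerivedObj colim n).symm
end
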